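/- Let R be a left-symmetric conformal algebra, Q a ℂ[∂]-module, and E = R ⊕ Q the direct sum of ℂ[∂]-modules. Suppose (E, ·_λ·) is a left-symmetric conformal algebra whose λ-product restricted to R coincides with that of R (so R is a subalgebra of E). Then there exists a left-symmetric conformal extending structure Ω(R,Q) = (φ, ψ, l, r, g_λ(·,·), ∘_λ) of R by Q and an isomorphism of left-symmetric conformal algebras E → R♮Q which stabilizes R and co-stabilizes Q, where R♮Q is the unified product of R and Ω(R,Q). -/
import Mathlib


open Finsupp Polynomial

noncomputable section

/-- One-variable conformal polynomials in λ with coefficients in `W`: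
the coefficient of `λ^n` sits at index `n`. -/
abbrev OP (W : Type*) [Zero W] := ℕ →₀ W

/-- Two-variable conformal polynomials in λ, μ with coefficients in `W`. -/
abbrev TP (W : Type*) [Zero W] := (ℕ × ℕ) →₀ W

section Defs

variable {U V W L : Type*}
variable [AddCommGroup U] [Module ℂ U] [AddCommGroup V] [Module ℂ V]
variable [AddCommGroup W] [Module ℂ W] [AddCommGroup L] [Module ℂ L]

/-- Multiplication by the variable λ on one-variable polynomials. -/
def lsh : OP W →ₗ[ℂ] OP W := Finsupp.lmapDomain W ℂ (· + 1)

/-- Multiplication by λ on two-variable polynomials. -/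
def LX : TP W →ₗ[ℂ] TP W := Finsupp.lmapDomain W ℂ (fun p => (p.1 + 1, p.2))

/-- Multiplication by μ on two-variable polynomials. -/
def LY : TP W →ₗ[ℂ] TP W := Finsupp.lmapDomain W ℂ (fun p => (p.1, p.2 + 1))

/-- Coefficientwise action of ∂ on one-variable polynomials. -/
def pD (dW : W →ₗ[ℂ] W) : OP W →ₗ[ℂ] OP W := Finsupp.mapRange.linearMap dW

/-- Coefficientwise action of ∂ on two-variable polynomials. -/
def PD (dW : W →ₗ[ℂ] W) : TP W →ₗ[ℂ] TP W := Finsupp.mapRange.linearMap dW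

/-- The operator −λ−∂ on one-variable polynomials. -/
def nD (dW : W →ₗ[ℂ] W) : OP W →ₗ[ℂ] OP W := -lsh - pD dW

/-- The operator −λ−∂ on two-variable polynomials. -/
def nX (dW : W →ₗ[ℂ] W) : TP W →ₗ[ℂ] TP W := -LX - PD dW

/-- The operator −μ−∂ on two-variable polynomials. -/
def nY (dW : W →ₗ[ℂ] W) : TP W →ₗ[ℂ] TP W := -LY - PD dW

/-- The operator −λ−μ−∂ on two-variable polynomials. -/
def nXY (dW : W →ₗ[ℂ] W) : TP W →ₗ[ℂ] TP W := -LX - LY - PD dW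

/-- Substitution of a (commuting) operator `A` for the variable of a one-variable
polynomial, with values in two-variable polynomials. -/
def evA (A : TP W →ₗ[ℂ] TP W) : OP W →ₗ[ℂ] TP W :=
  Finsupp.lsum ℂ (fun k => (A ^ k) ∘ₗ Finsupp.lsingle ((0, 0) : ℕ × ℕ))

/-- Substitution of an operator `A` for the variable of a one-variable polynomial. -/
def evA1 (A : OP W →ₗ[ℂ] OP W) : OP W →ₗ[ℂ] OP W :=
  Finsupp.lsum ℂ (fun k => (A ^ k) ∘ₗ Finsupp.lsingle (0 : ℕ))

/-- `u_A v`: the pairing `m` evaluated with the variable replaced by the operator `A`. -/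
def ev2 (m : U →ₗ[ℂ] V →ₗ[ℂ] OP W) (A : TP W →ₗ[ℂ] TP W) (u : U) (v : V) : TP W :=
  evA A (m u v)

/-- Extension of the pairing `m`, in its first argument, to two-variable polynomials. -/
def exL (m : U →ₗ[ℂ] V →ₗ[ℂ] OP W) (A : TP W →ₗ[ℂ] TP W) (p : TP U) (v : V) : TP W :=
  Finsupp.sum p fun ij u => (LX ^ ij.1) ((LY ^ ij.2) (evA A (m u v)))

/-- Extension of the pairing `m`, in its second argument, to two-variable polynomials. -/
def exR (m : U →ₗ[ℂ] V →ₗ[ℂ] OP W) (A : TP W →ₗ[ℂ] TP W) (u : U) (p : TP V) : TP W :=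
  Finsupp.sum p fun ij v => (LX ^ ij.1) ((LY ^ ij.2) (evA A (m u v)))

/-- Extension of a unary conformal-linear map to two-variable polynomials. -/
def exU (D : U →ₗ[ℂ] OP W) (A : TP W →ₗ[ℂ] TP W) (p : TP U) : TP W :=
  Finsupp.sum p fun ij u => (LX ^ ij.1) ((LY ^ ij.2) (evA A (D u)))

/-- Coefficientwise application of a linear map to a one-variable polynomial. -/
def pMap (f : U →ₗ[ℂ] W) : OP U →ₗ[ℂ] OP W := Finsupp.mapRange.linearMap f

/-- A conformal bilinear map: `f(∂u, v) = −λ f(u,v)` and `f(u, ∂v) = (λ+∂) f(u,v)`. -/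
structure ConfBilin (dU : U →ₗ[ℂ] U) (dV : V →ₗ[ℂ] V) (dW : W →ₗ[ℂ] W)
    (m : U →ₗ[ℂ] V →ₗ[ℂ] OP W) : Prop where
  dleft : ∀ u v, m (dU u) v = -lsh (m u v)
  dright : ∀ u v, m u (dV v) = lsh (m u v) + pD dW (m u v)

/-- A left-symmetric conformal algebra structure on the ℂ[∂]-module `(L, dL)`. -/
structure IsLSCA (dL : L →ₗ[ℂ] L) (m : L →ₗ[ℂ] L →ₗ[ℂ] OP L) : Prop where
  conf : ConfBilin dL dL dL m
  lsym : ∀ a b c : L,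
    exL m (LX + LY) (ev2 m LX a b) c - exR m LX a (ev2 m LY b c)
      = exL m (LX + LY) (ev2 m LY b a) c - exR m LY b (ev2 m LX a c)

/-- The commutator λ-bracket `[u_λ v] = u_λ v − v_{−λ−∂} u`. -/
def commut (dL : L →ₗ[ℂ] L) (m : L →ₗ[ℂ] L →ₗ[ℂ] OP L) : L →ₗ[ℂ] L →ₗ[ℂ] OP L :=
  m - (m.compr₂ (evA1 (nD dL))).flip

/-- A Lie conformal algebra structure on the ℂ[∂]-module `(L, dL)`. -/
structure IsLieCA (dL : L →ₗ[ℂ] L) (br : L →ₗ[ℂ] L →ₗ[ℂ] OP L) : Prop where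
  dleft : ∀ u v, br (dL u) v = -lsh (br u v)
  dright : ∀ u v, br u (dL v) = lsh (br u v) + pD dL (br u v)
  skew : ∀ u v, br u v = -evA1 (nD dL) (br v u)
  jacobi : ∀ a b c : L,
    exR br LX a (ev2 br LY b c)
      = exL br (LX + LY) (ev2 br LX a b) c + exR br LY b (ev2 br LX a c)

end Defs

section Ext

variable {R Q : Type*} [AddCommGroup R] [Module ℂ R] [AddCommGroup Q] [Module ℂ Q]

/-- An extending datum of a left-symmetric conformal algebra `R` by a ℂ[∂]-module `Q`. -/
structure ExtDatum (dR : R →ₗ[ℂ] R) (dQ : Q →ₗ[ℂ] Q) where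
  phi : Q →ₗ[ℂ] R →ₗ[ℂ] OP R
  psi : Q →ₗ[ℂ] R →ₗ[ℂ] OP R
  l : R →ₗ[ℂ] Q →ₗ[ℂ] OP Q
  r : R →ₗ[ℂ] Q →ₗ[ℂ] OP Q
  g : Q →ₗ[ℂ] Q →ₗ[ℂ] OP R
  o : Q →ₗ[ℂ] Q →ₗ[ℂ] OP Q
  hphi : ConfBilin dQ dR dR phi
  hpsi : ConfBilin dQ dR dR psi
  hl : ConfBilin dR dQ dQ l
  hr : ConfBilin dR dQ dQ r
  hg : ConfBilin dQ dQ dR g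
  ho : ConfBilin dQ dQ dQ o

/-- Embedding of `R`-valued polynomials into `(R ⊕ Q)`-valued polynomials. -/
def inlP (R Q : Type*) [AddCommGroup R] [Module ℂ R] [AddCommGroup Q] [Module ℂ Q] :
    OP R →ₗ[ℂ] OP (R × Q) := Finsupp.mapRange.linearMap (LinearMap.inl ℂ R Q)

/-- Embedding of `Q`-valued polynomials into `(R ⊕ Q)`-valued polynomials. -/
def inrP (R Q : Type*) [AddCommGroup R] [Module ℂ R] [AddCommGroup Q] [Module ℂ Q] :
    OP Q →ₗ[ℂ] OP (R × Q) := Finsupp.mapRange.linearMap (LinearMap.inr ℂ R Q)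

/-- The λ-product of the unified product `R ♮ Q`:
`(a+x) _λ (b+y) = (a_λ b + φ(x)_λ b + ψ(y)_{−λ−∂} a + g_λ(x,y)) + (x∘_λ y + l(a)_λ y + r(b)_{−λ−∂} x)`. -/
def uprod (dR : R →ₗ[ℂ] R) (dQ : Q →ₗ[ℂ] Q) (Ω : ExtDatum dR dQ)
    (m : R →ₗ[ℂ] R →ₗ[ℂ] OP R) :
    (R × Q) →ₗ[ℂ] (R × Q) →ₗ[ℂ] OP (R × Q) :=
  ((m.compl₁₂ (LinearMap.fst ℂ R Q) (LinearMap.fst ℂ R Q)).compr₂ (inlP R Q))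
    + ((Ω.phi.compl₁₂ (LinearMap.snd ℂ R Q) (LinearMap.fst ℂ R Q)).compr₂ (inlP R Q))
    + (((Ω.psi.compl₁₂ (LinearMap.snd ℂ R Q) (LinearMap.fst ℂ R Q)).compr₂
        (inlP R Q ∘ₗ evA1 (nD dR))).flip)
    + ((Ω.g.compl₁₂ (LinearMap.snd ℂ R Q) (LinearMap.snd ℂ R Q)).compr₂ (inlP R Q))
    + ((Ω.o.compl₁₂ (LinearMap.snd ℂ R Q) (LinearMap.snd ℂ R Q)).compr₂ (inrP R Q))
    + ((Ω.l.compl₁₂ (LinearMap.fst ℂ R Q) (LinearMap.snd ℂ R Q)).compr₂ (inrP R Q))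
    + (((Ω.r.compl₁₂ (LinearMap.fst ℂ R Q) (LinearMap.snd ℂ R Q)).compr₂
        (inrP R Q ∘ₗ evA1 (nD dQ))).flip)

lemma uprod_apply (dR : R →ₗ[ℂ] R) (dQ : Q →ₗ[ℂ] Q) (Ω : ExtDatum dR dQ)
    (m : R →ₗ[ℂ] R →ₗ[ℂ] OP R) (e₁ e₂ : R × Q) :
    uprod dR dQ Ω m e₁ e₂ =
      inlP R Q (m e₁.1 e₂.1 + Ω.phi e₁.2 e₂.1 + evA1 (nD dR) (Ω.psi e₂.2 e₁.1) + Ω.g e₁.2 e₂.2)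
      + inrP R Q (Ω.o e₁.2 e₂.2 + Ω.l e₁.1 e₂.2 + evA1 (nD dQ) (Ω.r e₂.1 e₁.2)) := by
  simp [uprod, LinearMap.add_apply, LinearMap.compr₂_apply, LinearMap.compl₁₂_apply,
    LinearMap.flip_apply, map_add, LinearMap.comp_apply]
  abel

lemma uprod_res (dR : R →ₗ[ℂ] R) (dQ : Q →ₗ[ℂ] Q) (Ω : ExtDatum dR dQ)
    (m : R →ₗ[ℂ] R →ₗ[ℂ] OP R) (a b : R) :
    uprod dR dQ Ω m (a, (0 : Q)) (b, 0) = inlP R Q (m a b) := by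
  rw [uprod_apply]
  simp

/-- Isomorphism property of left-symmetric conformal algebra structures, via
a ℂ[∂]-module automorphism `T` of the underlying module `E`. -/
structure IsIsoLSCA {E : Type*} [AddCommGroup E] [Module ℂ E] (dE : E →ₗ[ℂ] E)
    (m₁ m₂ : E →ₗ[ℂ] E →ₗ[ℂ] OP E) (T : E ≃ₗ[ℂ] E) : Prop where
  dcomm : ∀ e, T (dE e) = dE (T e)
  mult : ∀ u v, m₂ (T u) (T v) = pMap (T : E →ₗ[ℂ] E) (m₁ u v)

/-- `T` stabilizes `R`, i.e. `T ∘ i = i` for the inclusion `i : R → R ⊕ Q`. -/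
def Stab (T : (R × Q) ≃ₗ[ℂ] (R × Q)) : Prop := ∀ a : R, T (a, 0) = (a, 0)

/-- `T` co-stabilizes `Q`, i.e. `π ∘ T = π` for the projection `π : R ⊕ Q → Q`. -/
def Costab (T : (R × Q) ≃ₗ[ℂ] (R × Q)) : Prop := ∀ e, (T e).2 = e.2

end Ext


section Aux2
variable {U W : Type*} [AddCommGroup U] [Module ℂ U] [AddCommGroup W] [Module ℂ W]

lemma lsh_single (k : ℕ) (w : W) : lsh (Finsupp.single k w) = Finsupp.single (k+1) w := by
  simp [lsh]

lemma pD_single (d : W →ₗ[ℂ] W) (k : ℕ) (w : W) :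
    pD d (Finsupp.single k w) = Finsupp.single k (d w) := by
  simp [pD]

lemma pMap_single (f : U →ₗ[ℂ] W) (k : ℕ) (u : U) :
    pMap f (Finsupp.single k u) = Finsupp.single k (f u) := by simp [pMap]

lemma evA1_single (A : OP W →ₗ[ℂ] OP W) (k : ℕ) (w : W) :
    evA1 A (Finsupp.single k w) = (A ^ k) (Finsupp.single 0 w) := by
  simp [evA1]

lemma nD_apply (d : W →ₗ[ℂ] W) (p : OP W) : nD d p = -lsh p - pD d p := by
  simp only [nD, LinearMap.sub_apply, LinearMap.neg_apply]

lemma pMap_lsh (f : U →ₗ[ℂ] W) (p : OP U) : pMap f (lsh p) = lsh (pMap f p) := by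
  have : pMap f ∘ₗ lsh = lsh ∘ₗ pMap f := by
    apply Finsupp.lhom_ext; intro k u
    simp [lsh_single, pD_single, pMap_single]
  exact LinearMap.congr_fun this p

lemma pMap_pD (f : U →ₗ[ℂ] W) (dU : U →ₗ[ℂ] U) (dW : W →ₗ[ℂ] W)
    (h : ∀ u, f (dU u) = dW (f u)) (p : OP U) : pMap f (pD dU p) = pD dW (pMap f p) := by
  have : pMap f ∘ₗ pD dU = pD dW ∘ₗ pMap f := by
    apply Finsupp.lhom_ext; intro k u
    simp [pD_single, pMap_single, h]
  exact LinearMap.congr_fun this p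

lemma lsh_pD (d : W →ₗ[ℂ] W) (p : OP W) : lsh (pD d p) = pD d (lsh p) := by
  have : lsh ∘ₗ pD d = pD d ∘ₗ lsh := by
    apply Finsupp.lhom_ext; intro k w
    simp [lsh_single, pD_single]
  exact LinearMap.congr_fun this p

lemma nD_pD_comm (d : W →ₗ[ℂ] W) : pD d ∘ₗ nD d = nD d ∘ₗ pD d := by
  apply LinearMap.ext; intro p
  simp only [nD, LinearMap.comp_apply, LinearMap.sub_apply, LinearMap.neg_apply, map_sub, map_neg]
  rw [lsh_pD]

lemma evA1_lsh (A : OP W →ₗ[ℂ] OP W) (p : OP W) : evA1 A (lsh p) = A (evA1 A p) := by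
  have : evA1 A ∘ₗ lsh = A ∘ₗ evA1 A := by
    apply Finsupp.lhom_ext; intro k w
    have hcomm := LinearMap.congr_fun (Commute.self_pow A k).eq (Finsupp.single (0:ℕ) w)
    simp only [Module.End.mul_apply] at hcomm
    simp only [LinearMap.comp_apply, lsh_single, evA1_single, pow_succ, Module.End.mul_apply, hcomm]
  exact LinearMap.congr_fun this p

lemma evA1_pD (A : OP W →ₗ[ℂ] OP W) (d : W →ₗ[ℂ] W)
    (h : pD d ∘ₗ A = A ∘ₗ pD d) (p : OP W) : evA1 A (pD d p) = pD d (evA1 A p) := by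
  have hc : Commute (pD d) A := by
    simp only [Commute, SemiconjBy, Module.End.mul_eq_comp]; exact h
  have : evA1 A ∘ₗ pD d = pD d ∘ₗ evA1 A := by
    apply Finsupp.lhom_ext; intro k w
    have hk := LinearMap.congr_fun (hc.pow_right k).eq (Finsupp.single 0 w)
    simp only [Module.End.mul_apply] at hk
    simp only [LinearMap.comp_apply, pD_single, evA1_single]
    rw [← pD_single d 0 w, hk]
  exact LinearMap.congr_fun this p

lemma evA1_nD_nD (d : W →ₗ[ℂ] W) (p : OP W) :
    evA1 (nD d) (nD d p) = lsh (evA1 (nD d) p) := by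
  have h1 : nD d p = -lsh p - pD d p := by simp [nD]
  rw [h1, map_sub, map_neg, evA1_lsh, evA1_pD (nD d) d (nD_pD_comm d)]
  rw [show (nD d) (evA1 (nD d) p) = -lsh (evA1 (nD d) p) - pD d (evA1 (nD d) p) from
    nD_apply d _]
  abel

lemma evA1_nD_pow (d : W →ₗ[ℂ] W) (k : ℕ) (p : OP W) :
    evA1 (nD d) ((nD d ^ k) p) = (lsh ^ k) (evA1 (nD d) p) := by
  induction k generalizing p with
  | zero => simp
  | succ n ih =>
      rw [pow_succ, pow_succ, Module.End.mul_apply, Module.End.mul_apply, ih, evA1_nD_nD]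

lemma lsh_pow_single (k : ℕ) (w : W) :
    (lsh ^ k) (Finsupp.single (0:ℕ) w) = Finsupp.single k w := by
  induction k with
  | zero => simp
  | succ n ih => rw [pow_succ', Module.End.mul_apply, ih, lsh_single]

lemma evA1_nD_invol (d : W →ₗ[ℂ] W) (p : OP W) :
    evA1 (nD d) (evA1 (nD d) p) = p := by
  have : evA1 (nD d) ∘ₗ evA1 (nD d) = LinearMap.id := by
    apply Finsupp.lhom_ext; intro k w
    simp only [LinearMap.comp_apply, LinearMap.id_apply, evA1_single, evA1_nD_pow,
      pow_zero, Module.End.one_apply, lsh_pow_single]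
  exact LinearMap.congr_fun this p

end Aux2

section Construct
variable {R Q : Type*} [AddCommGroup R] [Module ℂ R] [AddCommGroup Q] [Module ℂ Q]

lemma recon' (P : OP (R × Q)) :
    inlP R Q (pMap (LinearMap.fst ℂ R Q) P) + inrP R Q (pMap (LinearMap.snd ℂ R Q) P) = P := by
  have : (inlP R Q ∘ₗ pMap (LinearMap.fst ℂ R Q)) + (inrP R Q ∘ₗ pMap (LinearMap.snd ℂ R Q))
      = LinearMap.id := by
    apply Finsupp.lhom_ext; intro k e
    simp [inlP, inrP, pMap_single, ← Finsupp.single_add]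
  exact LinearMap.congr_fun this P

lemma pMap_fst_inlP (p : OP R) : pMap (LinearMap.fst ℂ R Q) (inlP R Q p) = p := by
  have : pMap (LinearMap.fst ℂ R Q) ∘ₗ inlP R Q = LinearMap.id := by
    apply Finsupp.lhom_ext; intro k a; simp [inlP, pMap_single]
  exact LinearMap.congr_fun this p

variable (dR : R →ₗ[ℂ] R) (dQ : Q →ₗ[ℂ] Q)
variable (mE : (R × Q) →ₗ[ℂ] (R × Q) →ₗ[ℂ] OP (R × Q))

/-- The map φ extracted from `mE`. -/
def PHI : Q →ₗ[ℂ] R →ₗ[ℂ] OP R :=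
  (mE.compl₁₂ (LinearMap.inr ℂ R Q) (LinearMap.inl ℂ R Q)).compr₂ (pMap (LinearMap.fst ℂ R Q))

/-- The map ψ extracted from `mE`. -/
def PSI : Q →ₗ[ℂ] R →ₗ[ℂ] OP R :=
  ((mE.compl₁₂ (LinearMap.inl ℂ R Q) (LinearMap.inr ℂ R Q)).compr₂
    (evA1 (nD dR) ∘ₗ pMap (LinearMap.fst ℂ R Q))).flip

/-- The map l extracted from `mE`. -/
def LL : R →ₗ[ℂ] Q →ₗ[ℂ] OP Q :=
  (mE.compl₁₂ (LinearMap.inl ℂ R Q) (LinearMap.inr ℂ R Q)).compr₂ (pMap (LinearMap.snd ℂ R Q))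

/-- The map r extracted from `mE`. -/
def RR : R →ₗ[ℂ] Q →ₗ[ℂ] OP Q :=
  ((mE.compl₁₂ (LinearMap.inr ℂ R Q) (LinearMap.inl ℂ R Q)).compr₂
    (evA1 (nD dQ) ∘ₗ pMap (LinearMap.snd ℂ R Q))).flip

/-- The map g extracted from `mE`. -/
def GG : Q →ₗ[ℂ] Q →ₗ[ℂ] OP R :=
  (mE.compl₁₂ (LinearMap.inr ℂ R Q) (LinearMap.inr ℂ R Q)).compr₂ (pMap (LinearMap.fst ℂ R Q))

/-- The map ∘ extracted from `mE`. -/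
def OO : Q →ₗ[ℂ] Q →ₗ[ℂ] OP Q :=
  (mE.compl₁₂ (LinearMap.inr ℂ R Q) (LinearMap.inr ℂ R Q)).compr₂ (pMap (LinearMap.snd ℂ R Q))

lemma PHI_apply (x : Q) (b : R) :
    PHI mE x b = pMap (LinearMap.fst ℂ R Q) (mE ((0:R), x) (b, (0:Q))) := by
  simp [PHI, LinearMap.compr₂_apply, LinearMap.compl₁₂_apply]

lemma PSI_apply (y : Q) (a : R) :
    PSI dR mE y a = evA1 (nD dR) (pMap (LinearMap.fst ℂ R Q) (mE (a, (0:Q)) ((0:R), y))) := by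
  simp [PSI, LinearMap.compr₂_apply, LinearMap.compl₁₂_apply]

lemma LL_apply (a : R) (y : Q) :
    LL mE a y = pMap (LinearMap.snd ℂ R Q) (mE (a, (0:Q)) ((0:R), y)) := by
  simp [LL, LinearMap.compr₂_apply, LinearMap.compl₁₂_apply]

lemma RR_apply (b : R) (x : Q) :
    RR dQ mE b x = evA1 (nD dQ) (pMap (LinearMap.snd ℂ R Q) (mE ((0:R), x) (b, (0:Q)))) := by
  simp [RR, LinearMap.compr₂_apply, LinearMap.compl₁₂_apply]

lemma GG_apply (x y : Q) :
    GG mE x y = pMap (LinearMap.fst ℂ R Q) (mE ((0:R), x) ((0:R), y)) := by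
  simp [GG, LinearMap.compr₂_apply, LinearMap.compl₁₂_apply]

lemma OO_apply (x y : Q) :
    OO mE x y = pMap (LinearMap.snd ℂ R Q) (mE ((0:R), x) ((0:R), y)) := by
  simp [OO, LinearMap.compr₂_apply, LinearMap.compl₁₂_apply]

variable (hE : ConfBilin (dR.prodMap dQ) (dR.prodMap dQ) (dR.prodMap dQ) mE)

lemma hfstE : ∀ e : R × Q, (LinearMap.fst ℂ R Q) ((dR.prodMap dQ) e) = dR ((LinearMap.fst ℂ R Q) e) :=
  fun e => by simp

lemma hsndE : ∀ e : R × Q, (LinearMap.snd ℂ R Q) ((dR.prodMap dQ) e) = dQ ((LinearMap.snd ℂ R Q) e) :=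
  fun e => by simp

include hE

lemma hPHI : ConfBilin dQ dR dR (PHI mE) := by
  constructor
  · intro x b
    rw [PHI_apply, PHI_apply, show ((0:R), dQ x) = (dR.prodMap dQ) ((0:R), x) by simp,
      hE.dleft, map_neg, pMap_lsh]
  · intro x b
    rw [PHI_apply, PHI_apply, show (dR b, (0:Q)) = (dR.prodMap dQ) (b, (0:Q)) by simp,
      hE.dright, map_add, pMap_lsh, pMap_pD _ _ dR (hfstE dR dQ)]

lemma hGG : ConfBilin dQ dQ dR (GG mE) := by
  constructor
  · intro x y
    rw [GG_apply, GG_apply, show ((0:R), dQ x) = (dR.prodMap dQ) ((0:R), x) by simp,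
      hE.dleft, map_neg, pMap_lsh]
  · intro x y
    rw [GG_apply, GG_apply, show ((0:R), dQ y) = (dR.prodMap dQ) ((0:R), y) by simp,
      hE.dright, map_add, pMap_lsh, pMap_pD _ _ dR (hfstE dR dQ)]

lemma hOO : ConfBilin dQ dQ dQ (OO mE) := by
  constructor
  · intro x y
    rw [OO_apply, OO_apply, show ((0:R), dQ x) = (dR.prodMap dQ) ((0:R), x) by simp,
      hE.dleft, map_neg, pMap_lsh]
  · intro x y
    rw [OO_apply, OO_apply, show ((0:R), dQ y) = (dR.prodMap dQ) ((0:R), y) by simp,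
      hE.dright, map_add, pMap_lsh, pMap_pD _ _ dQ (hsndE dR dQ)]

lemma hLL : ConfBilin dR dQ dQ (LL mE) := by
  constructor
  · intro a y
    rw [LL_apply, LL_apply, show (dR a, (0:Q)) = (dR.prodMap dQ) (a, (0:Q)) by simp,
      hE.dleft, map_neg, pMap_lsh]
  · intro a y
    rw [LL_apply, LL_apply, show ((0:R), dQ y) = (dR.prodMap dQ) ((0:R), y) by simp,
      hE.dright, map_add, pMap_lsh, pMap_pD _ _ dQ (hsndE dR dQ)]

lemma hPSI : ConfBilin dQ dR dR (PSI dR mE) := by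
  constructor
  · intro y a
    rw [PSI_apply, PSI_apply, show ((0:R), dQ y) = (dR.prodMap dQ) ((0:R), y) by simp,
      hE.dright, map_add, pMap_lsh, pMap_pD _ _ dR (hfstE dR dQ), map_add, evA1_lsh,
      evA1_pD _ dR (nD_pD_comm dR), nD_apply]
    abel
  · intro y a
    rw [PSI_apply, PSI_apply, show (dR a, (0:Q)) = (dR.prodMap dQ) (a, (0:Q)) by simp,
      hE.dleft, map_neg, pMap_lsh, map_neg, evA1_lsh, nD_apply]
    abel

lemma hRR : ConfBilin dR dQ dQ (RR dQ mE) := by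
  constructor
  · intro b x
    rw [RR_apply, RR_apply, show (dR b, (0:Q)) = (dR.prodMap dQ) (b, (0:Q)) by simp,
      hE.dright, map_add, pMap_lsh, pMap_pD _ _ dQ (hsndE dR dQ), map_add, evA1_lsh,
      evA1_pD _ dQ (nD_pD_comm dQ), nD_apply]
    abel
  · intro b x
    rw [RR_apply, RR_apply, show ((0:R), dQ x) = (dR.prodMap dQ) ((0:R), x) by simp,
      hE.dleft, map_neg, pMap_lsh, map_neg, evA1_lsh, nD_apply]
    abel

end Construct

/-- **Theorem 3.6.**  Let `R` be a left-symmetric conformal algebra, `Q` a ℂ[∂]-module and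
`E = R ⊕ Q`.  If `(E, ·_λ·)` is a left-symmetric conformal algebra containing `R` as a
subalgebra (the product restricted to `R` is that of `R`), then there is a left-symmetric
conformal extending structure `Ω(R,Q)` of `R` by `Q` and an isomorphism of left-symmetric
conformal algebras `E ≅ R ♮ Q` which stabilizes `R` and co-stabilizes `Q`. -/
theorem E_iso_unified_product
    {R Q : Type*} [AddCommGroup R] [Module ℂ R] [AddCommGroup Q] [Module ℂ Q]
    (dR : R →ₗ[ℂ] R) (dQ : Q →ₗ[ℂ] Q)
    (m : R →ₗ[ℂ] R →ₗ[ℂ] OP R) (hm : IsLSCA dR m)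
    (mE : (R × Q) →ₗ[ℂ] (R × Q) →ₗ[ℂ] OP (R × Q))
    (hE : IsLSCA (dR.prodMap dQ) mE)
    (hsub : ∀ a b : R, mE (a, 0) (b, 0) = inlP R Q (m a b)) :
    ∃ Ω : ExtDatum dR dQ,
      IsLSCA (dR.prodMap dQ) (uprod dR dQ Ω m) ∧
      ∃ T : (R × Q) ≃ₗ[ℂ] (R × Q),
        IsIsoLSCA (dR.prodMap dQ) mE (uprod dR dQ Ω m) T ∧ Stab T ∧ Costab T := by
  have hc := hE.conf
  let Ω : ExtDatum dR dQ := ⟨PHI mE, PSI dR mE, LL mE, RR dQ mE, GG mE, OO mE,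
    hPHI dR dQ mE hc, hPSI dR dQ mE hc, hLL dR dQ mE hc, hRR dR dQ mE hc,
    hGG dR dQ mE hc, hOO dR dQ mE hc⟩
  have hphi' : Ω.phi = PHI mE := rfl
  have hpsi' : Ω.psi = PSI dR mE := rfl
  have hl' : Ω.l = LL mE := rfl
  have hr' : Ω.r = RR dQ mE := rfl
  have hg' : Ω.g = GG mE := rfl
  have ho' : Ω.o = OO mE := rfl
  have huv : ∀ e₁ e₂, uprod dR dQ Ω m e₁ e₂ = mE e₁ e₂ := by
    rintro ⟨a, x⟩ ⟨b, y⟩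
    rw [uprod_apply, hphi', hpsi', hl', hr', hg', ho']
    dsimp only
    rw [PHI_apply, PSI_apply, LL_apply, RR_apply, GG_apply, OO_apply,
      evA1_nD_invol, evA1_nD_invol]
    have hsplit : mE (a, x) (b, y)
        = mE (a, 0) (b, 0) + mE (a, (0:Q)) ((0:R), y) + mE ((0:R), x) (b, (0:Q))
          + mE ((0:R), x) ((0:R), y) := by
      have h1 : ((a, x) : R × Q) = (a, 0) + (0, x) := by simp
      have h2 : ((b, y) : R × Q) = (b, 0) + (0, y) := by simp
      rw [h1, h2]
      simp only [map_add, LinearMap.add_apply]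
      abel
    rw [hsplit, hsub]
    have r2 := recon' (mE (a, (0:Q)) ((0:R), y))
    have r3 := recon' (mE ((0:R), x) (b, (0:Q)))
    have r4 := recon' (mE ((0:R), x) ((0:R), y))
    conv_rhs => rw [← r2, ← r3, ← r4]
    simp only [map_add]
    abel
  have hEq : uprod dR dQ Ω m = mE := LinearMap.ext₂ huv
  refine ⟨Ω, by rw [hEq]; exact hE, LinearEquiv.refl ℂ (R × Q), ⟨fun e => rfl, ?_⟩,
    fun a => rfl, fun e => rfl⟩
  intro u v
  rw [hEq]
  simp [pMap]
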